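/- arXiv:2107.01756 — 5 statements merged into one kernel-verified Lean document; each statement's English description precedes it below -/
import Mathlib

section
/- Let f be a sense-preserving harmonic mapping on the unit disk D. Then the function A_f(z) = ((1-|z|²)/2)·P_f(z) - conj(z) does not vanish identically on D. (Equivalently: there is no constant k > 0 with (1-|z|²)·J_f(z)^{1/2} = k for all z in D.) -/
open Complex Metric Set

noncomputable section

/-- The open unit disk in ℂ. -/
def 𝔻 : Set ℂ := Metric.ball (0 : ℂ) 1

/-- Dilatation ω = g'/h' of a harmonic mapping f = h + conj g. -/
def dil (h g : ℂ → ℂ) (z : ℂ) : ℂ := deriv g z / deriv h z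

/-- Harmonic pre-Schwarzian P_f = h''/h' - conj(ω)·ω'/(1-|ω|²). -/
def Pf (h g : ℂ → ℂ) (z : ℂ) : ℂ :=
  deriv (deriv h) z / deriv h z -
    (starRingEnd ℂ) (dil h g z) * deriv (dil h g) z /
      (((1 - ‖dil h g z‖ ^ 2 : ℝ) : ℂ))

/-- The operator A_f(z) = ((1-|z|²)/2)·P_f(z) - conj z. -/
def Af (h g : ℂ → ℂ) (z : ℂ) : ℂ :=
  (((1 - ‖z‖ ^ 2 : ℝ) : ℂ)) / 2 * Pf h g z - (starRingEnd ℂ) z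

/-- The operator A_φ for an analytic φ. -/
def Aan (φ : ℂ → ℂ) (z : ℂ) : ℂ :=
  (((1 - ‖z‖ ^ 2 : ℝ) : ℂ)) / 2 * (deriv (deriv φ) z / deriv φ z) -
    (starRingEnd ℂ) z

/-- Jacobian J_f = |h'|² - |g'|². -/
def Jf (h g : ℂ → ℂ) (z : ℂ) : ℝ :=
  ‖deriv h z‖ ^ 2 - ‖deriv g z‖ ^ 2

/-- f = h + conj g is a sense-preserving harmonic mapping on 𝔻. -/
def SensePreserving (h g : ℂ → ℂ) : Prop :=
  (∀ z ∈ 𝔻, AnalyticAt ℂ h z) ∧ (∀ z ∈ 𝔻, AnalyticAt ℂ g z) ∧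
  (∀ z ∈ 𝔻, deriv h z ≠ 0) ∧ (∀ z ∈ 𝔻, ‖dil h g z‖ < 1)

/-- Hyperbolic (Poincaré) distance on 𝔻, with density 1/(1-|z|²). -/
def hypDist (z w : ℂ) : ℝ :=
  (1 / 2) * Real.log
    ((1 + ‖(z - w) / (1 - (starRingEnd ℂ) w * z)‖) /
     (1 - ‖(z - w) / (1 - (starRingEnd ℂ) w * z)‖))

/-- Wirtinger derivative ∂_z of a real-valued function. -/
def wirtinger (u : ℂ → ℝ) (z : ℂ) : ℂ :=
  ((fderiv ℝ u z 1 : ℝ) : ℂ) / 2 - Complex.I * ((fderiv ℝ u z Complex.I : ℝ) : ℂ) / 2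

/-!
If `A_f ≡ 0`, then `u = (1 - |z|²)² J_f` has vanishing derivative on `𝔻`: since `∂J_f = J_f P_f`,
one gets `∂u = 2 (1 - |z|²) J_f A_f`. So `(1 - |z|²) √J_f` would be a positive constant `k`, which
is impossible: `J_f ≤ |h'|²` gives `|1/h'| ≤ (1 - |z|²)/k`, and the maximum principle on discs of
radius `r → 1` forces the holomorphic function `1/h'` to vanish.
-/

open Filter Topology ContinuousLinearMap ComplexConjugate

/-- The real-linear form `v ↦ Re (c * v)`; a real function `u` on `ℂ` has derivative
`reMulCLM (2 * ∂u/∂z)`. -/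
def reMulCLM (c : ℂ) : ℂ →L[ℝ] ℝ := reCLM ∘L lsmul ℝ ℂ c

@[simp]
lemma reMulCLM_apply (c v : ℂ) : reMulCLM c v = (c * v).re := rfl

lemma reMulCLM_sub (c d : ℂ) : reMulCLM (c - d) = reMulCLM c - reMulCLM d := by
  ext v; simp [sub_mul]

@[simp]
lemma reMulCLM_zero : reMulCLM 0 = 0 := by
  ext v; simp

lemma reMulCLM_neg (c : ℂ) : reMulCLM (-c) = -reMulCLM c := by
  ext v; simp

lemma HasDerivAt.hasFDerivAt_norm_sq {F : ℂ → ℂ} {F' z : ℂ} (hF : HasDerivAt F F' z) :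
    HasFDerivAt (fun w => ‖F w‖ ^ 2) (reMulCLM (2 * conj (F z) * F')) z := by
  refine (hF.hasFDerivAt.restrictScalars ℝ).norm_sq.congr_fderiv ?_
  ext v
  simp [Complex.inner]
  ring

lemma HasFDerivAt.mul_reMulCLM {u w : ℂ → ℝ} {c d z : ℂ} (hu : HasFDerivAt u (reMulCLM c) z)
    (hw : HasFDerivAt w (reMulCLM d) z) :
    HasFDerivAt (fun x => u x * w x) (reMulCLM (u z * d + w z * c)) z := by
  refine (hu.mul hw).congr_fderiv ?_
  ext v
  simp [add_mul, mul_assoc]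

lemma zero_mem_𝔻 : (0 : ℂ) ∈ 𝔻 := mem_ball_self one_pos

lemma one_sub_norm_sq_nonneg {z : ℂ} (hz : z ∈ 𝔻) : 0 ≤ 1 - ‖z‖ ^ 2 := by
  nlinarith [norm_nonneg z, mem_ball_zero_iff.1 hz]

lemma Jf_pos {h g : ℂ → ℂ} {z : ℂ} (hh : deriv h z ≠ 0) (hω : ‖dil h g z‖ < 1) :
    0 < Jf h g z := by
  have hlt : ‖deriv g z‖ < ‖deriv h z‖ := by
    rwa [dil, norm_div, div_lt_one (norm_pos_iff.2 hh)] at hω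
  unfold Jf
  nlinarith [norm_nonneg (deriv g z)]

lemma sqrt_Jf_le_norm_deriv (h g : ℂ → ℂ) (z : ℂ) : √(Jf h g z) ≤ ‖deriv h z‖ :=
  (Real.sqrt_le_left (norm_nonneg _)).2 (sub_le_self _ (sq_nonneg _))

lemma Jf_mul_Pf {h g : ℂ → ℂ} {z : ℂ} (hh : DifferentiableAt ℂ (deriv h) z)
    (hg : DifferentiableAt ℂ (deriv g) z) (hh₀ : deriv h z ≠ 0) (hω : ‖dil h g z‖ ≠ 1) :
    (Jf h g z : ℂ) * Pf h g z =
      conj (deriv h z) * deriv (deriv h) z - conj (deriv g z) * deriv (deriv g) z := by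
  rw [Pf]
  set a := deriv h z
  set b := deriv g z
  have hdil : deriv (dil h g) z = (deriv (deriv g) z * a - b * deriv (deriv h) z) / a ^ 2 :=
    (hg.hasDerivAt.div hh.hasDerivAt hh₀).deriv
  have hJ : (Jf h g z : ℂ) = a * conj a - b * conj b := by
    simp [Jf, a, b, Complex.mul_conj, Complex.sq_norm]
  have hω₀ : dil h g z = b / a := rfl
  have hca : conj a ≠ 0 := (map_ne_zero _).2 hh₀
  have hω' : ((1 - ‖dil h g z‖ ^ 2 : ℝ) : ℂ) = (a * conj a - b * conj b) / (a * conj a) := by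
    rw [Complex.sq_norm, Complex.ofReal_sub, Complex.ofReal_one, ← Complex.mul_conj, hω₀,
      map_div₀]
    field_simp
  have hden : a * conj a - b * conj b ≠ 0 := by
    intro h0
    have h1 : ((1 - ‖dil h g z‖ ^ 2 : ℝ) : ℂ) = 0 := by rw [hω', h0, zero_div]
    have h2 : ‖dil h g z‖ ^ 2 = 1 ^ 2 := by linarith [Complex.ofReal_eq_zero.1 h1]
    exact hω ((pow_left_inj₀ (norm_nonneg _) zero_le_one two_ne_zero).1 h2)
  rw [hdil, hω', hJ, hω₀, map_div₀]
  field_simp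
  ring

lemma hasFDerivAt_one_sub_sq_sq_mul_Jf {h g : ℂ → ℂ} {z : ℂ}
    (hh : DifferentiableAt ℂ (deriv h) z) (hg : DifferentiableAt ℂ (deriv g) z)
    (hh₀ : deriv h z ≠ 0) (hω : ‖dil h g z‖ ≠ 1) :
    HasFDerivAt (fun w => (1 - ‖w‖ ^ 2) ^ 2 * Jf h g w)
      (reMulCLM (4 * (1 - ‖z‖ ^ 2 : ℝ) * Jf h g z * Af h g z)) z := by
  have hS : HasFDerivAt (fun w : ℂ => 1 - ‖w‖ ^ 2) (reMulCLM (-(2 * conj z))) z := by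
    rw [reMulCLM_neg]
    simpa using ((hasDerivAt_id z).hasFDerivAt_norm_sq).const_sub 1
  have hJ : HasFDerivAt (Jf h g) (reMulCLM (2 * conj (deriv h z) * deriv (deriv h) z -
      2 * conj (deriv g z) * deriv (deriv g) z)) z := by
    rw [reMulCLM_sub]
    exact hh.hasDerivAt.hasFDerivAt_norm_sq.sub hg.hasDerivAt.hasFDerivAt_norm_sq
  convert (hS.mul_reMulCLM hS).mul_reMulCLM hJ using 2
  · ring
  · rw [Af]
    push_cast
    linear_combination (2 * (1 - (‖z‖ : ℂ) ^ 2) ^ 2) * Jf_mul_Pf hh hg hh₀ hω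

lemma eqOn_zero_of_norm_le_mul_one_sub_sq {φ : ℂ → ℂ} (hφ : DifferentiableOn ℂ φ (ball 0 1))
    {C : ℝ} (hC : ∀ z ∈ ball (0 : ℂ) 1, ‖φ z‖ ≤ C * (1 - ‖z‖ ^ 2)) :
    EqOn φ 0 (ball 0 1) := by
  intro w hw
  rw [mem_ball_zero_iff] at hw
  have hle : ∀ r ∈ Ioo ‖w‖ 1, ‖φ w‖ ≤ C * (1 - r ^ 2) := by
    rintro r ⟨hwr, hr1⟩
    have hr : r ≠ 0 := ((norm_nonneg w).trans_lt hwr).ne'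
    have hφr : DiffContOnCl ℂ φ (ball 0 r) := by
      refine (hφ.mono ?_).diffContOnCl
      rw [closure_ball 0 hr]
      exact closedBall_subset_ball hr1
    refine Complex.norm_le_of_forall_mem_frontier_norm_le isBounded_ball hφr (fun z hz => ?_) ?_
    · rw [frontier_ball 0 hr, mem_sphere_zero_iff_norm] at hz
      simpa [hz] using hC z (mem_ball_zero_iff.2 (hz ▸ hr1))
    · exact subset_closure (mem_ball_zero_iff.2 hwr)
  have hlim : Tendsto (fun r : ℝ => C * (1 - r ^ 2)) (𝓝[<] 1) (𝓝 0) := by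
    have hcont : Continuous fun r : ℝ => C * (1 - r ^ 2) := by fun_prop
    simpa using (hcont.tendsto 1).mono_left nhdsWithin_le_nhds
  have h0 : ‖φ w‖ ≤ 0 :=
    ge_of_tendsto hlim (eventually_of_mem (Ioo_mem_nhdsLT hw) hle)
  simpa using h0

namespace SensePreserving

variable {h g : ℂ → ℂ}

lemma not_exists_one_sub_sq_mul_sqrt_Jf_eq_const (hf : SensePreserving h g) :
    ¬ ∃ k : ℝ, 0 < k ∧ ∀ z ∈ 𝔻, (1 - ‖z‖ ^ 2) * √(Jf h g z) = k := by
  rintro ⟨k, hk, hconst⟩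
  obtain ⟨hh, -, hh₀, -⟩ := hf
  have hdiff : DifferentiableOn ℂ (fun z => (deriv h z)⁻¹) 𝔻 := fun z hz =>
    ((hh z hz).deriv.differentiableAt.inv (hh₀ z hz)).differentiableWithinAt
  -- `k = (1 - |z|²) √J_f ≤ (1 - |z|²) |h'|`, so `1/h'` tends to `0` at the boundary.
  have hbound : ∀ z ∈ 𝔻, ‖(deriv h z)⁻¹‖ ≤ k⁻¹ * (1 - ‖z‖ ^ 2) := by
    intro z hz
    have hk_le : k ≤ (1 - ‖z‖ ^ 2) * ‖deriv h z‖ := hconst z hz ▸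
      mul_le_mul_of_nonneg_left (sqrt_Jf_le_norm_deriv h g z) (one_sub_norm_sq_nonneg hz)
    rw [norm_inv, inv_le_iff_one_le_mul₀ (norm_pos_iff.2 (hh₀ z hz)), mul_assoc,
      le_inv_mul_iff₀ hk]
    linarith
  exact inv_ne_zero (hh₀ 0 zero_mem_𝔻)
    (eqOn_zero_of_norm_le_mul_one_sub_sq hdiff hbound zero_mem_𝔻)

lemma one_sub_sq_mul_sqrt_Jf_eq_of_Af_eq_zero (hf : SensePreserving h g)
    (hA : ∀ z ∈ 𝔻, Af h g z = 0) {z : ℂ} (hz : z ∈ 𝔻) :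
    (1 - ‖z‖ ^ 2) * √(Jf h g z) = √(Jf h g 0) := by
  obtain ⟨hh, hg, hh₀, hω⟩ := hf
  have hderiv : ∀ w ∈ 𝔻, HasFDerivAt (fun w => (1 - ‖w‖ ^ 2) ^ 2 * Jf h g w)
      (0 : ℂ →L[ℝ] ℝ) w := by
    intro w hw
    simpa [hA w hw] using hasFDerivAt_one_sub_sq_sq_mul_Jf (hh w hw).deriv.differentiableAt
      (hg w hw).deriv.differentiableAt (hh₀ w hw) (hω w hw).ne
  have hconst := isOpen_ball.is_const_of_fderiv_eq_zero (𝕜 := ℝ) (convex_ball 0 1).isPreconnected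
    (fun w hw => (hderiv w hw).differentiableAt.differentiableWithinAt)
    (fun w hw => (hderiv w hw).fderiv) hz zero_mem_𝔻
  calc (1 - ‖z‖ ^ 2) * √(Jf h g z) = √((1 - ‖z‖ ^ 2) ^ 2 * Jf h g z) := by
        rw [Real.sqrt_mul (sq_nonneg _), Real.sqrt_sq (one_sub_norm_sq_nonneg hz)]
    _ = √(Jf h g 0) := by simpa using congrArg Real.sqrt hconst

end SensePreserving

/-- A_f does not vanish identically on 𝔻; equivalently there is no
constant k > 0 with (1-|z|²)·J_f(z)^{1/2} = k on 𝔻. -/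
theorem stmt_2 (h g : ℂ → ℂ) (hf : SensePreserving h g) :
    (¬ ∀ z ∈ 𝔻, Af h g z = 0) ∧
    (¬ ∃ k : ℝ, 0 < k ∧ ∀ z ∈ 𝔻, (1 - ‖z‖ ^ 2) * Real.sqrt (Jf h g z) = k) := by
  refine ⟨fun hA => hf.not_exists_one_sub_sq_mul_sqrt_Jf_eq_const ⟨√(Jf h g 0), ?_, ?_⟩,
    hf.not_exists_one_sub_sq_mul_sqrt_Jf_eq_const⟩
  · exact Real.sqrt_pos.2 (Jf_pos (hf.2.2.1 0 zero_mem_𝔻) (hf.2.2.2 0 zero_mem_𝔻))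
  · exact fun z hz => hf.one_sub_sq_mul_sqrt_Jf_eq_of_Af_eq_zero hA hz
end
end

section
/- Let f be a sense-preserving harmonic mapping on the unit disk D. Then the lower order μ(f) := inf_{z∈D} |A_f(z)| satisfies 0 ≤ μ(f) ≤ 3/2. More precisely, for every z in D, |A_f(z)| ≤ |A_h(z)| + 1/2 where h is the analytic part, using the Schwarz–Pick inequality (1-|z|²)|ω'(z)| ≤ 1 - |ω(z)|² for the dilatation ω. -/
/-!
Writing `ω` for the dilatation, `A_f = A_h - ((1 - |z|²)/2) · conj ω · ω' / (1 - |ω|²)`.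
By the Schwarz–Pick inequality `(1 - |z|²)|ω'| ≤ 1 - |ω|²` the correction term has modulus
at most `|ω|/2 < 1/2`, which gives the pointwise bound; taking infima over the disk and using
Pommerenke's bound `inf |A_h| ≤ 1` gives `μ(f) ≤ 3/2`. Schwarz–Pick itself is the Schwarz
lemma applied to `ω` conjugated by disk automorphisms sending `0 ↦ z` and `ω(z) ↦ 0`.
-/

open Complex Metric Set

noncomputable section

def mobius (a z : ℂ) : ℂ := (z + a) / (1 + (starRingEnd ℂ) a * z)

lemma one_add_conj_mul_ne_zero {a z : ℂ} (ha : ‖a‖ < 1) (hz : ‖z‖ < 1) :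
    1 + (starRingEnd ℂ) a * z ≠ 0 := by
  intro h
  have h1 : ‖(starRingEnd ℂ) a * z‖ = 1 := by
    rw [show (starRingEnd ℂ) a * z = -1 by linear_combination h]; simp
  rw [norm_mul, Complex.norm_conj] at h1
  nlinarith [norm_nonneg a, norm_nonneg z]

lemma normSq_one_add_conj_mul_sub_normSq_add (a z : ℂ) :
    Complex.normSq (1 + (starRingEnd ℂ) a * z) - Complex.normSq (z + a)
      = (1 - Complex.normSq a) * (1 - Complex.normSq z) := by
  simp only [Complex.normSq_apply, Complex.add_re, Complex.add_im, Complex.mul_re,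
    Complex.mul_im, Complex.conj_re, Complex.conj_im, Complex.one_re, Complex.one_im]
  ring

lemma mapsTo_mobius {a : ℂ} (ha : ‖a‖ < 1) : MapsTo (mobius a) (ball 0 1) (ball 0 1) := by
  intro z hz
  rw [mem_ball_zero_iff] at hz ⊢
  have hsq : ∀ w : ℂ, ‖w‖ < 1 → Complex.normSq w < 1 := fun w hw => by
    rw [← Complex.sq_norm]; nlinarith [norm_nonneg w]
  have hlt : ‖z + a‖ < ‖1 + (starRingEnd ℂ) a * z‖ := by
    rw [Complex.norm_def, Complex.norm_def]
    refine Real.sqrt_lt_sqrt (Complex.normSq_nonneg _) ?_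
    nlinarith [normSq_one_add_conj_mul_sub_normSq_add a z, hsq a ha, hsq z hz]
  rwa [mobius, norm_div, div_lt_one (norm_pos_iff.mpr (one_add_conj_mul_ne_zero ha hz))]

lemma hasDerivAt_mobius {a z : ℂ} (hz : 1 + (starRingEnd ℂ) a * z ≠ 0) :
    HasDerivAt (mobius a) ((1 - (starRingEnd ℂ) a * a) / (1 + (starRingEnd ℂ) a * z) ^ 2) z := by
  have hnum : HasDerivAt (fun w : ℂ => w + a) 1 z := (hasDerivAt_id z).add_const a
  have hden : HasDerivAt (fun w : ℂ => 1 + (starRingEnd ℂ) a * w) ((starRingEnd ℂ) a) z := by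
    simpa using ((hasDerivAt_id z).const_mul ((starRingEnd ℂ) a)).const_add 1
  exact (hnum.div hden hz).congr_deriv (by ring)

lemma differentiableOn_mobius {a : ℂ} (ha : ‖a‖ < 1) : DifferentiableOn ℂ (mobius a) (ball 0 1) :=
  fun _ hz => (hasDerivAt_mobius (one_add_conj_mul_ne_zero ha (mem_ball_zero_iff.mp hz)))
    |>.differentiableAt.differentiableWithinAt

lemma mobius_zero (a : ℂ) : mobius a 0 = a := by simp [mobius]

lemma mobius_neg_self (b : ℂ) : mobius (-b) b = 0 := by simp [mobius]

lemma hasDerivAt_mobius_zero (a : ℂ) : HasDerivAt (mobius a) ((1 - ‖a‖ ^ 2 : ℝ) : ℂ) 0 := by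
  convert hasDerivAt_mobius (a := a) (z := 0) (by simp) using 1
  rw [Complex.conj_mul']; push_cast; ring

lemma hasDerivAt_mobius_neg_self {b : ℂ} (hb : ‖b‖ < 1) :
    HasDerivAt (mobius (-b)) ((1 - ‖b‖ ^ 2 : ℝ)⁻¹ : ℂ) b := by
  have hB : ((1 - ‖b‖ ^ 2 : ℝ) : ℂ) ≠ 0 := by
    exact_mod_cast (show (1 - ‖b‖ ^ 2 : ℝ) ≠ 0 by nlinarith [norm_nonneg b])
  have hden : 1 + (starRingEnd ℂ) (-b) * b = ((1 - ‖b‖ ^ 2 : ℝ) : ℂ) := by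
    rw [map_neg, neg_mul, Complex.conj_mul']; push_cast; ring
  convert hasDerivAt_mobius (hden ▸ hB) using 1
  rw [hden, map_neg, neg_mul_neg, Complex.conj_mul']
  field_simp
  push_cast; ring

theorem schwarz_pick {ω : ℂ → ℂ} (hd : DifferentiableOn ℂ ω (ball 0 1))
    (hm : MapsTo ω (ball 0 1) (ball 0 1)) {a : ℂ} (ha : a ∈ ball (0 : ℂ) 1) :
    (1 - ‖a‖ ^ 2) * ‖deriv ω a‖ ≤ 1 - ‖ω a‖ ^ 2 := by
  have ha' : ‖a‖ < 1 := mem_ball_zero_iff.mp ha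
  have hb : ‖ω a‖ < 1 := mem_ball_zero_iff.mp (hm ha)
  have hb' : ‖-ω a‖ < 1 := by rwa [norm_neg]
  set F := mobius (-ω a) ∘ ω ∘ mobius a
  have hFmaps : MapsTo F (ball 0 1) (ball 0 1) :=
    (mapsTo_mobius hb').comp (hm.comp (mapsTo_mobius ha'))
  have hFdiff : DifferentiableOn ℂ F (ball 0 1) :=
    (differentiableOn_mobius hb').comp (hd.comp (differentiableOn_mobius ha') (mapsTo_mobius ha'))
      (hm.comp (mapsTo_mobius ha'))
  have hF0 : F 0 = 0 := by simp only [F, Function.comp_apply, mobius_zero, mobius_neg_self]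
  have hω : HasDerivAt ω (deriv ω a) (mobius a 0) := by
    rw [mobius_zero]; exact (hd.differentiableAt (isOpen_ball.mem_nhds ha)).hasDerivAt
  have hψ : HasDerivAt (mobius (-ω a)) ((1 - ‖ω a‖ ^ 2 : ℝ)⁻¹ : ℂ) ((ω ∘ mobius a) 0) := by
    simpa only [Function.comp_apply, mobius_zero] using hasDerivAt_mobius_neg_self hb
  have hFderiv := hψ.comp 0 (hω.comp 0 (hasDerivAt_mobius_zero a))
  have hSchwarz : ‖deriv F 0‖ ≤ 1 := Complex.norm_deriv_le_one_of_mapsTo_ball hFdiff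
    (by rw [hF0]; exact hFmaps.mono_right ball_subset_closedBall) one_pos
  have hA : 0 < 1 - ‖a‖ ^ 2 := by nlinarith [norm_nonneg a]
  have hB : 0 < 1 - ‖ω a‖ ^ 2 := by nlinarith [norm_nonneg (ω a)]
  rw [hFderiv.deriv, norm_mul, norm_mul, norm_inv, Complex.norm_real, Complex.norm_real,
    Real.norm_of_nonneg hA.le, Real.norm_of_nonneg hB.le, inv_mul_le_iff₀ hB] at hSchwarz
  linarith

lemma SensePreserving.differentiableOn_dil {h g : ℂ → ℂ} (hf : SensePreserving h g) :
    DifferentiableOn ℂ (dil h g) 𝔻 := fun z hz =>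
  ((AnalyticOnNhd.deriv hf.2.1 z hz).div (AnalyticOnNhd.deriv hf.1 z hz) (hf.2.2.1 z hz))
    |>.differentiableAt.differentiableWithinAt

lemma SensePreserving.mapsTo_dil {h g : ℂ → ℂ} (hf : SensePreserving h g) :
    MapsTo (dil h g) 𝔻 𝔻 := fun z hz => mem_ball_zero_iff.mpr (hf.2.2.2 z hz)

lemma Af_eq_Aan_sub (h g : ℂ → ℂ) (z : ℂ) :
    Af h g z = Aan h z - ((1 - ‖z‖ ^ 2 : ℝ) : ℂ) / 2 *
      ((starRingEnd ℂ) (dil h g z) * deriv (dil h g) z / ((1 - ‖dil h g z‖ ^ 2 : ℝ) : ℂ)) := by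
  simp only [Af, Pf, Aan]; ring

lemma norm_half_mul_conj_mul_div_le_half {z w w' : ℂ} (hz : ‖z‖ ≤ 1) (hw : ‖w‖ < 1)
    (hpick : (1 - ‖z‖ ^ 2) * ‖w'‖ ≤ 1 - ‖w‖ ^ 2) :
    ‖((1 - ‖z‖ ^ 2 : ℝ) : ℂ) / 2 * ((starRingEnd ℂ) w * w' / ((1 - ‖w‖ ^ 2 : ℝ) : ℂ))‖
      ≤ 1 / 2 := by
  have hA : 0 ≤ 1 - ‖z‖ ^ 2 := by nlinarith [norm_nonneg z]
  have hB : 0 < 1 - ‖w‖ ^ 2 := by nlinarith [norm_nonneg w]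
  rw [norm_mul, norm_div, norm_div, norm_mul, Complex.norm_conj, Complex.norm_real,
    Complex.norm_real, Complex.norm_two, Real.norm_of_nonneg hA, Real.norm_of_nonneg hB.le,
    div_mul_div_comm, div_le_div_iff₀ (by positivity) two_pos]
  -- `hpick` bounds the numerator by `|w| (1 - |w|²) ≤ 1 - |w|²`.
  nlinarith [mul_le_mul_of_nonneg_left hpick (norm_nonneg w), norm_nonneg w]

lemma SensePreserving.norm_Af_le {h g : ℂ → ℂ} (hf : SensePreserving h g) {z : ℂ}
    (hz : z ∈ 𝔻) : ‖Af h g z‖ ≤ ‖Aan h z‖ + 1 / 2 := by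
  rw [Af_eq_Aan_sub]
  refine (norm_sub_le _ _).trans (add_le_add_right ?_ _)
  exact norm_half_mul_conj_mul_div_le_half (mem_ball_zero_iff.mp hz).le (hf.2.2.2 z hz)
    (schwarz_pick hf.differentiableOn_dil hf.mapsTo_dil hz)

lemma csInf_image_le_csInf_image_add {α : Type*} {s : Set α} {u v : α → ℝ} {c : ℝ}
    (hs : s.Nonempty) (hu : BddBelow (u '' s)) (huv : ∀ x ∈ s, u x ≤ v x + c) :
    sInf (u '' s) ≤ sInf (v '' s) + c := by
  rw [← sub_le_iff_le_add]
  refine le_csInf (hs.image v) ?_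
  rintro _ ⟨x, hx, rfl⟩
  linarith [csInf_le hu (mem_image_of_mem u hx), huv x hx]

/-- 0 ≤ μ(f) ≤ 3/2, and pointwise |A_f(z)| ≤ |A_h(z)| + 1/2.
(The fact inf|A_h| ≤ 1 for the analytic part, due to Pommerenke, is assumed.) -/
theorem stmt_5 (h g : ℂ → ℂ) (hf : SensePreserving h g)
    (hPom : sInf ((fun z => ‖Aan h z‖) '' 𝔻) ≤ 1) :
    (0 ≤ sInf ((fun z => ‖Af h g z‖) '' 𝔻) ∧
     sInf ((fun z => ‖Af h g z‖) '' 𝔻) ≤ 3 / 2) ∧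
    (∀ z ∈ 𝔻, ‖Af h g z‖ ≤ ‖Aan h z‖ + 1 / 2) := by
  have hnonneg : ∀ x ∈ (fun z => ‖Af h g z‖) '' 𝔻, 0 ≤ x := by
    rintro _ ⟨z, -, rfl⟩; exact norm_nonneg _
  have hinf := csInf_image_le_csInf_image_add (s := 𝔻) ⟨0, mem_ball_self one_pos⟩ ⟨0, hnonneg⟩
    fun z hz => hf.norm_Af_le hz
  exact ⟨⟨Real.sInf_nonneg hnonneg, by linarith⟩, fun z hz => hf.norm_Af_le hz⟩
end
end

section
/- Let f be a sense-preserving harmonic mapping on the unit disk D, let 0 ≤ λ ≤ 1, and suppose |P_f(z) - 2/(1-z)| ≤ 2λ/(1-|z|²) for all z ∈ D. Then |A_f(z)| ≥ 1 - λ for all z ∈ D; in particular μ(f) ≥ 1 - λ. -/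
open Complex Metric Set

noncomputable section

/-!
Writing `A_f(z) = ((1-|z|²)/2)(P_f(z) - 2/(1-z)) + (1 - z̄)/(1 - z)`, the second summand is
unimodular and the hypothesis bounds the first by `λ`, so the reverse triangle inequality
gives `|A_f(z)| ≥ 1 - λ`.
-/

lemma norm_one_sub_conj_div_one_sub {z : ℂ} (hz : z ≠ 1) :
    ‖(1 - (starRingEnd ℂ) z) / (1 - z)‖ = 1 := by
  have hconj : 1 - (starRingEnd ℂ) z = (starRingEnd ℂ) (1 - z) := by simp
  rw [hconj, norm_div, Complex.norm_conj,
    div_self (norm_ne_zero_iff.mpr (sub_ne_zero.mpr hz.symm))]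

lemma half_mul_sub_conj_eq {z : ℂ} (hz : z ≠ 1) (P : ℂ) :
    ((1 - ‖z‖ ^ 2 : ℝ) : ℂ) / 2 * P - (starRingEnd ℂ) z =
      ((1 - ‖z‖ ^ 2 : ℝ) : ℂ) / 2 * (P - 2 / (1 - z)) + (1 - (starRingEnd ℂ) z) / (1 - z) := by
  have h1z : (1 : ℂ) - z ≠ 0 := sub_ne_zero.mpr hz.symm
  have hcast : ((1 - ‖z‖ ^ 2 : ℝ) : ℂ) = 1 - z * (starRingEnd ℂ) z := by
    rw [Complex.mul_conj, ← Complex.sq_norm]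
    push_cast
    ring
  rw [hcast]
  field_simp
  ring

lemma norm_half_mul_le {z w : ℂ} {l : ℝ} (hz : z ∈ 𝔻) (hw : ‖w‖ ≤ 2 * l / (1 - ‖z‖ ^ 2)) :
    ‖((1 - ‖z‖ ^ 2 : ℝ) : ℂ) / 2 * w‖ ≤ l := by
  have hz1 : ‖z‖ < 1 := mem_ball_zero_iff.mp hz
  have hpos : 0 < 1 - ‖z‖ ^ 2 := by nlinarith [norm_nonneg z]
  rw [norm_mul, norm_div, Complex.norm_real, Real.norm_of_nonneg hpos.le, Complex.norm_two]
  calc (1 - ‖z‖ ^ 2) / 2 * ‖w‖ ≤ (1 - ‖z‖ ^ 2) / 2 * (2 * l / (1 - ‖z‖ ^ 2)) := by gcongr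
    _ = l := by field_simp

lemma one_sub_le_norm_half_mul_sub_conj {z P : ℂ} {l : ℝ} (hz : z ∈ 𝔻)
    (hP : ‖P - 2 / (1 - z)‖ ≤ 2 * l / (1 - ‖z‖ ^ 2)) :
    1 - l ≤ ‖((1 - ‖z‖ ^ 2 : ℝ) : ℂ) / 2 * P - (starRingEnd ℂ) z‖ := by
  have hz1 : z ≠ 1 := by
    rintro rfl
    simp [𝔻] at hz
  rw [half_mul_sub_conj_eq hz1, add_comm]
  calc 1 - l ≤ ‖(1 - (starRingEnd ℂ) z) / (1 - z)‖ -
        ‖((1 - ‖z‖ ^ 2 : ℝ) : ℂ) / 2 * (P - 2 / (1 - z))‖ := by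
        rw [norm_one_sub_conj_div_one_sub hz1]
        linarith [norm_half_mul_le hz hP]
    _ ≤ _ := norm_sub_le_norm_add _ _

theorem stmt_10_general (h g : ℂ → ℂ)
    (l : ℝ)
    (hP : ∀ z ∈ 𝔻, ‖Pf h g z - 2 / (1 - z)‖ ≤ 2 * l / (1 - ‖z‖ ^ 2)) :
    (∀ z ∈ 𝔻, 1 - l ≤ ‖Af h g z‖) ∧
    1 - l ≤ sInf ((fun z => ‖Af h g z‖) '' 𝔻) := by
  have hA : ∀ z ∈ 𝔻, 1 - l ≤ ‖Af h g z‖ := fun z hz =>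
    one_sub_le_norm_half_mul_sub_conj hz (hP z hz)
  refine ⟨hA, le_csInf ⟨_, 0, by simp [𝔻], rfl⟩ ?_⟩
  rintro _ ⟨z, hz, rfl⟩
  exact hA z hz

/-- if |P_f(z) - 2/(1-z)| ≤ 2λ/(1-|z|²) on 𝔻 with 0 ≤ λ ≤ 1,
then |A_f(z)| ≥ 1-λ on 𝔻; in particular μ(f) ≥ 1-λ. -/
theorem stmt_10 (h g : ℂ → ℂ) (hf : SensePreserving h g)
    (l : ℝ) (hl0 : 0 ≤ l) (hl1 : l ≤ 1)
    (hP : ∀ z ∈ 𝔻, ‖Pf h g z - 2 / (1 - z)‖ ≤ 2 * l / (1 - ‖z‖ ^ 2)) :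
    (∀ z ∈ 𝔻, 1 - l ≤ ‖Af h g z‖) ∧
    1 - l ≤ sInf ((fun z => ‖Af h g z‖) '' 𝔻) :=
  stmt_10_general h g l hP
end
end

section
/- Let f = h + conj(g) be a sense-preserving harmonic mapping on the unit disk D with dilatation ω, and suppose that for every λ with |λ| = 1, the analytic function f_λ = h + λg satisfies |A_{f_λ}(z)| ≤ 1 for all z (as holds when each f_λ is convex univalent). Then for every z ∈ D, |A_f(z)| + ((1-|z|²)|ω'(z)|)/(2(1-|ω(z)|²)) ≤ 1. In particular ‖A_f‖ ≤ 1. -/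
open Complex Metric Set

noncomputable section

/-!
Write `W = (1-|z|²) ω'(z) / (2 (1-|ω(z)|²))`. Since `g' = ω h'`, the operator `A` of
`f_λ = h + λ g` splits as `A_{f_λ}(z) = A_f(z) + σ_z(λ) W` with the Möbius factor
`σ_z(λ) = (λ + conj ω(z)) / (1 + λ ω(z))`. As `σ_z` maps the unit circle onto itself, `λ` can be
chosen with `σ_z(λ) W` pointing in the direction of `A_f(z)`, and then
`|A_f(z)| + |W| = |A_{f_λ}(z)| ≤ 1`.
-/

open ComplexConjugate Filter Topology

theorem Complex.exists_norm_eq_one_norm_add_mul_eq (x w : ℂ) :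
    ∃ μ : ℂ, ‖μ‖ = 1 ∧ ‖x + μ * w‖ = ‖x‖ + ‖w‖ := by
  set μ := exp ((arg x - arg w : ℝ) * I)
  have hrot : μ * exp (arg w * I) = exp (arg x * I) := by
    rw [← exp_add]; push_cast; ring_nf
  have hsum : x + μ * w = ((‖x‖ + ‖w‖ : ℝ) : ℂ) * exp (arg x * I) := by
    push_cast
    linear_combination -norm_mul_exp_arg_mul_I x - μ * norm_mul_exp_arg_mul_I w + ‖w‖ * hrot
  refine ⟨μ, norm_exp_ofReal_mul_I _, ?_⟩
  rw [hsum, norm_mul, norm_exp_ofReal_mul_I, mul_one, norm_real,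
    Real.norm_of_nonneg (by positivity)]

theorem Complex.exists_norm_eq_one_moebius_eq {ω μ : ℂ} (hω : ‖ω‖ < 1) (hμ : ‖μ‖ = 1) :
    ∃ lam : ℂ, ‖lam‖ = 1 ∧ 1 + lam * ω ≠ 0 ∧ (lam + conj ω) / (1 + lam * ω) = μ := by
  have hμc : μ * conj μ = 1 := by
    rw [mul_conj, ← Complex.sq_norm, hμ]; norm_num
  have hden : 1 - μ * ω ≠ 0 := by
    intro h
    have : ‖μ * ω‖ = 1 := by rw [← sub_eq_zero.mp h, norm_one]
    rw [norm_mul, hμ, one_mul] at this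
    exact hω.ne this
  have hωc : 1 - ω * conj ω ≠ 0 := by
    rw [mul_conj, ← ofReal_one, ← ofReal_sub, ofReal_ne_zero, normSq_eq_norm_sq]
    nlinarith [norm_nonneg ω]
  have hnum : μ - conj ω = μ * conj (1 - μ * ω) := by
    rw [map_sub, map_mul, map_one]
    linear_combination conj ω * hμc
  have hone : 1 + (μ - conj ω) / (1 - μ * ω) * ω = (1 - ω * conj ω) / (1 - μ * ω) := by
    field_simp; ring
  refine ⟨(μ - conj ω) / (1 - μ * ω), ?_, ?_, ?_⟩
  · rw [norm_div, hnum, norm_mul, hμ, one_mul, norm_conj, div_self (norm_ne_zero_iff.mpr hden)]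
  · rw [hone]; exact div_ne_zero hωc hden
  · rw [hone, div_eq_iff (div_ne_zero hωc hden)]
    field_simp
    ring

theorem preschwarzian_add_mul_eq {a a₂ ω ω' c lam : ℂ} (ha : a ≠ 0) (hlam : 1 + lam * ω ≠ 0)
    (hc : 1 - c * ω ≠ 0) :
    (a₂ + lam * (ω' * a + ω * a₂)) / (a + lam * (ω * a)) =
      a₂ / a - c * ω' / (1 - c * ω) + (lam + c) / (1 + lam * ω) * (ω' / (1 - c * ω)) := by
  rw [show a + lam * (ω * a) = a * (1 + lam * ω) by ring, mul_comm c ω]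
  rw [mul_comm c ω] at hc
  field_simp
  ring

theorem deriv_add_const_mul_eventuallyEq {h g : ℂ → ℂ} {z : ℂ} (hh : AnalyticAt ℂ h z)
    (hg : AnalyticAt ℂ g z) (c : ℂ) :
    deriv (fun w => h w + c * g w) =ᶠ[𝓝 z] fun w => deriv h w + c * deriv g w := by
  filter_upwards [hh.eventually_analyticAt, hg.eventually_analyticAt] with w hhw hgw
  rw [deriv_fun_add hhw.differentiableAt (hgw.differentiableAt.const_mul c),
    deriv_const_mul c hgw.differentiableAt]

theorem deriv_dil_mul_add {h g : ℂ → ℂ} {z : ℂ} (hh : AnalyticAt ℂ h z) (hg : AnalyticAt ℂ g z)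
    (h0 : deriv h z ≠ 0) :
    deriv (dil h g) z * deriv h z + dil h g z * deriv (deriv h) z = deriv (deriv g) z := by
  rw [show dil h g = fun w => deriv g w / deriv h w from rfl,
    deriv_fun_div hg.deriv.differentiableAt hh.deriv.differentiableAt h0]
  field_simp
  ring

theorem Aan_add_mul_eq {h g : ℂ → ℂ} {z lam : ℂ} (hh : AnalyticAt ℂ h z) (hg : AnalyticAt ℂ g z)
    (h0 : deriv h z ≠ 0) (hω : ‖dil h g z‖ < 1) (hlam : 1 + lam * dil h g z ≠ 0) :
    Aan (fun w => h w + lam * g w) z =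
      Af h g z + (lam + conj (dil h g z)) / (1 + lam * dil h g z) *
        (((1 - ‖z‖ ^ 2 : ℝ) : ℂ) / 2 * deriv (dil h g) z / ((1 - ‖dil h g z‖ ^ 2 : ℝ) : ℂ)) := by
  have hD : ((1 - ‖dil h g z‖ ^ 2 : ℝ) : ℂ) = 1 - conj (dil h g z) * dil h g z := by
    rw [conj_mul', ofReal_sub, ofReal_one, ofReal_pow]
  have hD0 : 1 - conj (dil h g z) * dil h g z ≠ 0 := by
    rw [← hD, ofReal_ne_zero]
    nlinarith [norm_nonneg (dil h g z)]
  have hg' : deriv g z = dil h g z * deriv h z := (div_mul_cancel₀ _ h0).symm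
  have hev := deriv_add_const_mul_eventuallyEq hh hg lam
  have hd2 : deriv (deriv (fun w => h w + lam * g w)) z =
      deriv (deriv h) z + lam * deriv (deriv g) z := by
    rw [hev.deriv_eq, deriv_fun_add hh.deriv.differentiableAt
      (hg.deriv.differentiableAt.const_mul lam), deriv_const_mul lam hg.deriv.differentiableAt]
  rw [Aan, hd2, hev.eq_of_nhds, hg', ← deriv_dil_mul_add hh hg h0,
    preschwarzian_add_mul_eq h0 hlam hD0, Af, Pf, hD]
  ring

theorem norm_Af_add_le_one {h g : ℂ → ℂ} (hf : SensePreserving h g)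
    (hconv : ∀ lam : ℂ, ‖lam‖ = 1 → ∀ z ∈ 𝔻, ‖Aan (fun w => h w + lam * g w) z‖ ≤ 1)
    {z : ℂ} (hz : z ∈ 𝔻) :
    ‖Af h g z‖ + (1 - ‖z‖ ^ 2) * ‖deriv (dil h g) z‖ / (2 * (1 - ‖dil h g z‖ ^ 2)) ≤ 1 := by
  obtain ⟨hh, hg, h0, hω⟩ := hf
  set W : ℂ := ((1 - ‖z‖ ^ 2 : ℝ) : ℂ) / 2 * deriv (dil h g) z /
    ((1 - ‖dil h g z‖ ^ 2 : ℝ) : ℂ)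
  have hnormW : ‖W‖ = (1 - ‖z‖ ^ 2) * ‖deriv (dil h g) z‖ / (2 * (1 - ‖dil h g z‖ ^ 2)) := by
    have hz1 : ‖z‖ < 1 := mem_ball_zero_iff.mp hz
    have hω1 := hω z hz
    simp only [W, norm_div, norm_mul, norm_real, Real.norm_eq_abs, Complex.norm_two]
    rw [abs_of_nonneg (by nlinarith [norm_nonneg z]),
      abs_of_nonneg (by nlinarith [norm_nonneg (dil h g z)]), div_mul_eq_mul_div, div_div]
  obtain ⟨μ, hμ, hμW⟩ := Complex.exists_norm_eq_one_norm_add_mul_eq (Af h g z) W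
  obtain ⟨lam, hlam, hlam0, hσ⟩ := Complex.exists_norm_eq_one_moebius_eq (hω z hz) hμ
  have hbound := hconv lam hlam z hz
  rwa [Aan_add_mul_eq (hh z hz) (hg z hz) (h0 z hz) (hω z hz) hlam0, hσ, hμW, hnormW] at hbound

/-- if |A_{f_λ}| ≤ 1 on 𝔻 for every |λ| = 1 (as when each f_λ is convex
univalent), then |A_f(z)| + (1-|z|²)|ω'(z)|/(2(1-|ω(z)|²)) ≤ 1 on 𝔻; in particular ‖A_f‖ ≤ 1. -/
theorem stmt_13 (h g : ℂ → ℂ) (hf : SensePreserving h g)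
    (hconv : ∀ lam : ℂ, ‖lam‖ = 1 →
      ∀ z ∈ 𝔻, ‖Aan (fun w => h w + lam * g w) z‖ ≤ 1) :
    (∀ z ∈ 𝔻,
        ‖Af h g z‖ +
          (1 - ‖z‖ ^ 2) * ‖deriv (dil h g) z‖ /
            (2 * (1 - ‖dil h g z‖ ^ 2)) ≤ 1) ∧
    sSup ((fun z => ‖Af h g z‖) '' 𝔻) ≤ 1 := by
  refine ⟨fun z hz => norm_Af_add_le_one hf hconv hz, Real.sSup_le ?_ zero_le_one⟩
  rintro _ ⟨z, hz, rfl⟩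
  have hz1 : ‖z‖ < 1 := mem_ball_zero_iff.mp hz
  have hω1 := hf.2.2.2 z hz
  have hnonneg : 0 ≤ (1 - ‖z‖ ^ 2) * ‖deriv (dil h g) z‖ / (2 * (1 - ‖dil h g z‖ ^ 2)) :=
    div_nonneg (mul_nonneg (by nlinarith [norm_nonneg z]) (norm_nonneg _))
      (by nlinarith [norm_nonneg (dil h g z)])
  linarith [norm_Af_add_le_one hf hconv hz]
end
end

section
/- Let f be a sense-preserving harmonic mapping on the unit disk D with J_f(0) = 1, and suppose |A_f(z)| ≤ α for all z ∈ D. Then for all z ∈ D, (1-|z|)^{2α-2}/(1+|z|)^{2α+2} ≤ J_f(z) ≤ (1+|z|)^{2α-2}/(1-|z|)^{2α+2}. -/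
open Complex Metric Set

noncomputable section

/-!
Along a ray `s ↦ s e` (`‖e‖ = 1`) the function `v s = log ((1 - s²) √J_f(s e))` has derivative
`2 Re (e A_f(s e)) / (1 - s²)`, because `P_f = ∂_z J_f / J_f`. Hence `|v'| ≤ 2α / (1 - s²)`, the
derivative of `2α ρ(0, s)`, and since `v 0 = 0` the fencing theorem gives
`|log ((1 - |z|²) √J_f(z))| ≤ 2α ρ(0, z)`. Exponentiating, with `1 - |z|² = (1 - |z|)(1 + |z|)`,
gives both bounds.
-/

open ComplexConjugate

lemma mem_𝔻_iff {z : ℂ} : z ∈ 𝔻 ↔ ‖z‖ < 1 := mem_ball_zero_iff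

lemma ofReal_mul_mem_𝔻 {e : ℂ} (he : ‖e‖ = 1) {t : ℝ} (ht : |t| < 1) : (t : ℂ) * e ∈ 𝔻 := by
  rwa [mem_𝔻_iff, norm_mul, he, mul_one, norm_real, Real.norm_eq_abs]

lemma hasDerivAt_comp_ofReal_mul {F : ℂ → ℂ} {F' e : ℂ} {t : ℝ} (hF : HasDerivAt F F' (t * e)) :
    HasDerivAt (fun s : ℝ => F (s * e)) (e * F') t := by
  have hray : HasDerivAt (fun s : ℝ => (s : ℂ) * e) e t := by
    simpa using (hasDerivAt_id (t : ℂ)).comp_ofReal.mul_const e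
  rw [mul_comm]
  exact hF.comp t hray

lemma two_mul_hypDist_zero_right (z : ℂ) :
    2 * hypDist z 0 = Real.log ((1 + ‖z‖) / (1 - ‖z‖)) := by
  simp only [hypDist, sub_zero, map_zero, zero_mul, div_one]
  ring

-- `∂_z J_f`, the Wirtinger derivative of the Jacobian `|h'|² - |g'|²`.
def dJf (h g : ℂ → ℂ) (z : ℂ) : ℂ :=
  conj (deriv h z) * deriv (deriv h) z - conj (deriv g z) * deriv (deriv g) z

namespace SensePreserving

variable {h g : ℂ → ℂ} (hf : SensePreserving h g)
include hf

lemma norm_deriv_lt {z : ℂ} (hz : z ∈ 𝔻) : ‖deriv g z‖ < ‖deriv h z‖ := by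
  have := hf.2.2.2 z hz
  rwa [dil, norm_div, div_lt_one (norm_pos_iff.mpr (hf.2.2.1 z hz))] at this

lemma Jf_pos {z : ℂ} (hz : z ∈ 𝔻) : 0 < Jf h g z := by
  have := hf.norm_deriv_lt hz
  unfold Jf
  nlinarith [norm_nonneg (deriv g z)]

lemma Pf_eq {z : ℂ} (hz : z ∈ 𝔻) : Pf h g z = dJf h g z / (Jf h g z : ℂ) := by
  have ha : deriv h z ≠ 0 := hf.2.2.1 z hz
  have ha' : conj (deriv h z) ≠ 0 := (map_ne_zero _).mpr ha
  have hJ : (Jf h g z : ℂ) ≠ 0 := ofReal_ne_zero.mpr (hf.Jf_pos hz).ne'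
  have hJc : (Jf h g z : ℂ) = deriv h z * conj (deriv h z) - deriv g z * conj (deriv g z) := by
    simp only [Jf, ofReal_sub, ofReal_pow, ← mul_conj']
  have hdil : deriv (dil h g) z = (deriv (deriv g) z * deriv h z - deriv g z * deriv (deriv h) z)
      / deriv h z ^ 2 :=
    deriv_div (hf.2.1 z hz).deriv.differentiableAt (hf.1 z hz).deriv.differentiableAt ha
  have hω : ((1 - ‖dil h g z‖ ^ 2 : ℝ) : ℂ) = Jf h g z / (deriv h z * conj (deriv h z)) := by
    rw [eq_div_iff (mul_ne_zero ha ha'), hJc]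
    simp only [dil, ofReal_sub, ofReal_one, ofReal_pow, ← mul_conj', map_div₀]
    field_simp
  rw [Pf, dJf, hω, hdil, dil, map_div₀]
  field_simp
  rw [hJc]
  ring

lemma hasDerivAt_Jf_ray {e : ℂ} {t : ℝ} (ht : (t : ℂ) * e ∈ 𝔻) :
    HasDerivAt (fun s : ℝ => Jf h g (s * e)) (2 * (e * dJf h g (t * e)).re) t := by
  have H := (hasDerivAt_comp_ofReal_mul (hf.1 _ ht).deriv.differentiableAt.hasDerivAt).norm_sq
  have G := (hasDerivAt_comp_ofReal_mul (hf.2.1 _ ht).deriv.differentiableAt.hasDerivAt).norm_sq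
  refine (H.sub G).congr_deriv ?_
  simp only [dJf, Complex.inner, mul_sub, sub_re, mul_re, mul_im, conj_re, conj_im]
  ring

lemma hasDerivAt_log_distortion_ray {e : ℂ} (he : ‖e‖ = 1) {t : ℝ} (ht : |t| < 1) :
    HasDerivAt (fun s : ℝ => Real.log (1 - s ^ 2) + Real.log (Jf h g (s * e)) / 2)
      (2 * (e * Af h g (t * e)).re / (1 - t ^ 2)) t := by
  have hw := ofReal_mul_mem_𝔻 he ht
  have ht2 : 0 < 1 - t ^ 2 := by nlinarith [abs_lt.mp ht]
  have hJ := hf.Jf_pos hw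
  have hlog1 : HasDerivAt (fun s : ℝ => Real.log (1 - s ^ 2)) (-(2 * t) / (1 - t ^ 2)) t := by
    simpa using ((hasDerivAt_pow 2 t).const_sub 1).log ht2.ne'
  have hlogJ := (hf.hasDerivAt_Jf_ray hw).log hJ.ne'
  have hconj : e * conj ((t : ℂ) * e) = t := by
    rw [map_mul, conj_ofReal, mul_left_comm, mul_conj', he]
    simp
  have hnorm : ‖(t : ℂ) * e‖ ^ 2 = t ^ 2 := by
    rw [norm_mul, he, mul_one, norm_real, Real.norm_eq_abs, sq_abs]
  have hA : (e * Af h g (t * e)).re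
      = (1 - t ^ 2) / 2 * (e * dJf h g (t * e)).re / Jf h g (t * e) - t := by
    rw [Af, hf.Pf_eq hw, hnorm, mul_sub, hconj, mul_left_comm, ← ofReal_ofNat, ← ofReal_div,
      mul_div_assoc, sub_re, re_ofReal_mul, ← mul_div_assoc, div_ofReal_re, ofReal_re]
  refine (hlog1.add (hlogJ.div_const 2)).congr_deriv ?_
  rw [hA]
  field_simp
  ring

lemma abs_log_distortion_ray_le (hJ0 : Jf h g 0 = 1) {α : ℝ} (hA : ∀ z ∈ 𝔻, ‖Af h g z‖ ≤ α)
    {e : ℂ} (he : ‖e‖ = 1) {r : ℝ} (hr0 : 0 ≤ r) (hr1 : r < 1) :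
    |Real.log (1 - r ^ 2) + Real.log (Jf h g (r * e)) / 2|
      ≤ α * (Real.log (1 + r) - Real.log (1 - r)) := by
  have habs : ∀ s ∈ Icc 0 r, |s| < 1 := fun s hs =>
    abs_lt.mpr ⟨by linarith [hs.1], hs.2.trans_lt hr1⟩
  have hv := fun s hs => hf.hasDerivAt_log_distortion_ray he (habs s hs)
  have hB : ∀ s ∈ Icc 0 r, HasDerivAt (fun s => α * (Real.log (1 + s) - Real.log (1 - s)))
      (2 * α / (1 - s ^ 2)) s := by
    intro s hs
    obtain ⟨hs1, hs2⟩ := abs_lt.mp (habs s hs)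
    have hp : 1 + s ≠ 0 := by linarith
    have hm : 1 - s ≠ 0 := by linarith
    have h1 := ((hasDerivAt_id' s).const_add 1).log hp
    have h2 := ((hasDerivAt_id' s).const_sub 1).log hm
    refine ((h1.sub h2).const_mul α).congr_deriv ?_
    rw [show 1 - s ^ 2 = (1 + s) * (1 - s) by ring]
    field_simp
    ring
  refine image_norm_le_of_norm_deriv_right_le_deriv_boundary'
    (fun s hs => (hv s hs).continuousAt.continuousWithinAt)
    (fun s hs => (hv s (Ico_subset_Icc_self hs)).hasDerivWithinAt) (by simp [hJ0])
    (fun s hs => (hB s hs).continuousAt.continuousWithinAt)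
    (fun s hs => (hB s (Ico_subset_Icc_self hs)).hasDerivWithinAt) (fun s hs => ?_) ⟨hr0, le_rfl⟩
  have hs := Ico_subset_Icc_self hs
  have hs2 : 0 < 1 - s ^ 2 := by nlinarith [abs_lt.mp (habs s hs)]
  have hre : |(e * Af h g (s * e)).re| ≤ α :=
    calc |(e * Af h g (s * e)).re| ≤ ‖e * Af h g (s * e)‖ := abs_re_le_norm _
      _ = ‖Af h g (s * e)‖ := by rw [norm_mul, he, one_mul]
      _ ≤ α := hA _ (ofReal_mul_mem_𝔻 he (habs s hs))
  rw [Real.norm_eq_abs, abs_div, abs_of_pos hs2, abs_mul, abs_two]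
  gcongr

theorem abs_log_distortion_le (hJ0 : Jf h g 0 = 1) {α : ℝ} (hA : ∀ z ∈ 𝔻, ‖Af h g z‖ ≤ α)
    {z : ℂ} (hz : z ∈ 𝔻) :
    |Real.log ((1 - ‖z‖ ^ 2) * √(Jf h g z))| ≤ 2 * α * hypDist z 0 := by
  have hr := mem_𝔻_iff.mp hz
  have hJ := hf.Jf_pos hz
  have hray :=
    hf.abs_log_distortion_ray_le hJ0 hA (norm_exp_ofReal_mul_I (arg z)) (norm_nonneg z) hr
  rw [norm_mul_exp_arg_mul_I] at hray
  have hp : 0 < 1 + ‖z‖ := by linarith [norm_nonneg z]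
  have hm : 0 < 1 - ‖z‖ := by linarith
  rw [Real.log_mul (by nlinarith [norm_nonneg z]) (Real.sqrt_pos.mpr hJ).ne', Real.log_sqrt hJ.le,
    mul_comm 2 α, mul_assoc, two_mul_hypDist_zero_right, Real.log_div hp.ne' hm.ne']
  exact hray

end SensePreserving

lemma le_and_le_of_abs_log_le {r J α : ℝ} (hr : |r| < 1) (hJ : 0 < J)
    (hlog : |Real.log ((1 - r ^ 2) * √J)| ≤ α * Real.log ((1 + r) / (1 - r))) :
    (1 - r) ^ (2 * α - 2) / (1 + r) ^ (2 * α + 2) ≤ J ∧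
      J ≤ (1 + r) ^ (2 * α - 2) / (1 - r) ^ (2 * α + 2) := by
  obtain ⟨hp, hm⟩ : 0 < 1 + r ∧ 0 < 1 - r := by constructor <;> linarith [abs_lt.mp hr]
  rw [show 1 - r ^ 2 = (1 - r) * (1 + r) by ring, Real.log_mul (by positivity) (by positivity),
    Real.log_mul hm.ne' hp.ne', Real.log_sqrt hJ.le, Real.log_div hp.ne' hm.ne'] at hlog
  obtain ⟨hlo, hhi⟩ := abs_le.mp hlog
  constructor
  · rw [← Real.log_le_log_iff (by positivity) hJ, Real.log_div (by positivity) (by positivity),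
      Real.log_rpow hm, Real.log_rpow hp]
    linarith
  · rw [← Real.log_le_log_iff hJ (by positivity), Real.log_div (by positivity) (by positivity),
      Real.log_rpow hm, Real.log_rpow hp]
    linarith

theorem stmt_17_general (h g : ℂ → ℂ) (hf : SensePreserving h g) (α : ℝ)
    (hJ0 : Jf h g 0 = 1)
    (hA : ∀ z ∈ 𝔻, ‖Af h g z‖ ≤ α) :
    ∀ z ∈ 𝔻,
      (1 - ‖z‖) ^ (2 * α - 2) / (1 + ‖z‖) ^ (2 * α + 2) ≤ Jf h g z ∧
      Jf h g z ≤ (1 + ‖z‖) ^ (2 * α - 2) / (1 - ‖z‖) ^ (2 * α + 2) := by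
  intro z hz
  have hdist := hf.abs_log_distortion_le hJ0 hA hz
  rw [mul_comm 2 α, mul_assoc, two_mul_hypDist_zero_right] at hdist
  exact le_and_le_of_abs_log_le (by rwa [abs_norm, ← mem_𝔻_iff]) (hf.Jf_pos hz) hdist

/-- if J_f(0) = 1 and |A_f| ≤ α on 𝔻, then
(1-|z|)^{2α-2}/(1+|z|)^{2α+2} ≤ J_f(z) ≤ (1+|z|)^{2α-2}/(1-|z|)^{2α+2}. -/
theorem stmt_17 (h g : ℂ → ℂ) (hf : SensePreserving h g) (α : ℝ) (hα : 0 ≤ α)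
    (hJ0 : Jf h g 0 = 1)
    (hA : ∀ z ∈ 𝔻, ‖Af h g z‖ ≤ α) :
    ∀ z ∈ 𝔻,
      (1 - ‖z‖) ^ (2 * α - 2) / (1 + ‖z‖) ^ (2 * α + 2) ≤ Jf h g z ∧
      Jf h g z ≤ (1 + ‖z‖) ^ (2 * α - 2) / (1 - ‖z‖) ^ (2 * α + 2) :=
  stmt_17_general h g hf α hJ0 hA
end
end
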